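/- Let H be a linear 3-uniform hypergraph partitioned into color matchings, x a vertex of the signature graph G of H, and i a fixed color. Then the number of edges e incident to x in G such that the H-edge of T(e) containing the first coordinate of x has color i is at most 2. -/
import Mathlib

private lemma card_three_distinct {V : Type*} [DecidableEq V] {a b c : V}
    (h : ({a, b, c} : Finset V).card = 3) : a ≠ b ∧ a ≠ c ∧ b ≠ c := by
  refine ⟨fun he => ?_, fun he => ?_, fun he => ?_⟩
  · rw [he, Finset.insert_idem] at h
    have := Finset.card_insert_le b ({c} : Finset V)
    simp at this; omega
  · rw [he, Finset.insert_comm, Finset.insert_eq_self.mpr (Finset.mem_singleton_self _)] at h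
    have := Finset.card_insert_le b ({c} : Finset V)
    simp at this; omega
  · rw [he, Finset.insert_eq_self.mpr (Finset.mem_singleton_self _)] at h
    have := Finset.card_insert_le a ({c} : Finset V)
    simp at this; omega

/-- In the signature graph of a linear 3-uniform hypergraph partitioned into
color matchings, for a vertex `x = (u,v)` and a fixed color `i`, the number of incident
edges `e` (identified with neighbors `q`) such that the hyperedge of the cherry `T(e)`
containing the first coordinate `u` has color `i` is at most `2`. -/
theorem incident_edges_first_color_bound
    {V : Type*} [Fintype V] [DecidableEq V] (k : ℕ)
    (M : Fin k → Finset (Finset V)) (E : Finset (Finset V))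
    (hE : E = Finset.univ.biUnion (fun i => M i))
    (hcard : ∀ i, ∀ e ∈ M i, e.card = 3)
    (hmatching : ∀ i, ∀ e ∈ M i, ∀ e' ∈ M i, e ≠ e' → Disjoint e e')
    (hlinear : ∀ e ∈ E, ∀ e' ∈ E, e ≠ e' → (e ∩ e').card ≤ 1)
    (x : V × V) (i : Fin k) :
    Set.ncard {q : V × V |
        (({x.1, x.2} : Set V) ∩ {q.1, q.2} = ∅) ∧
        ∃ w : V, ({x.1, q.1, w} : Finset V) ∈ M i ∧ ({x.2, q.2, w} : Finset V) ∈ E} ≤ 2 := by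
  set S : Set (V × V) := {q : V × V |
        (({x.1, x.2} : Set V) ∩ {q.1, q.2} = ∅) ∧
        ∃ w : V, ({x.1, q.1, w} : Finset V) ∈ M i ∧ ({x.2, q.2, w} : Finset V) ∈ E} with hSdef
  -- card of any edge of E
  have hcardE : ∀ e ∈ E, e.card = 3 := by
    intro e he
    rw [hE, Finset.mem_biUnion] at he
    obtain ⟨j, _, hj⟩ := he
    exact hcard j e hj
  -- two M i edges both containing a vertex coincide
  have hMeq : ∀ e ∈ M i, ∀ e' ∈ M i, ∀ v : V, v ∈ e → v ∈ e' → e = e' := by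
    intro e he e' he' v hv hv'
    by_contra hne
    exact Finset.disjoint_left.mp (hmatching i e he e' he' hne) hv hv'
  -- two E edges sharing two distinct vertices coincide
  have hEeq : ∀ e ∈ E, ∀ e' ∈ E, ∀ v w : V, v ≠ w → v ∈ e → w ∈ e → v ∈ e' → w ∈ e' →
      e = e' := by
    intro e he e' he' v w hvw hv hw hv' hw'
    by_contra hne
    have hsub : ({v, w} : Finset V) ⊆ e ∩ e' := by
      intro z hz
      rw [Finset.mem_insert, Finset.mem_singleton] at hz
      rcases hz with rfl | rfl <;> simp [Finset.mem_inter, *]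
    have h2 : ({v, w} : Finset V).card = 2 := Finset.card_pair hvw
    have := Finset.card_le_card hsub
    have := hlinear e he e' he' hne
    omega
  -- key: same witness w forces equality
  have key : ∀ p ∈ S, ∀ q ∈ S, ∀ w : V,
      ({x.1, p.1, w} : Finset V) ∈ M i → ({x.2, p.2, w} : Finset V) ∈ E →
      ({x.1, q.1, w} : Finset V) ∈ M i → ({x.2, q.2, w} : Finset V) ∈ E → p = q := by
    intro p hp q hq w hp1 hp2 hq1 hq2
    obtain ⟨hpd, -⟩ := hp
    obtain ⟨hqd, -⟩ := hq
    have hpx1 : x.1 ≠ p.1 := by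
      intro h
      have : p.1 ∈ (({x.1, x.2} : Set V) ∩ {p.1, p.2}) := ⟨by simp [h], by simp⟩
      simp [hpd] at this
    have hqx1 : x.1 ≠ q.1 := by
      intro h
      have : q.1 ∈ (({x.1, x.2} : Set V) ∩ {q.1, q.2}) := ⟨by simp [h], by simp⟩
      simp [hqd] at this
    have hpx2 : x.2 ≠ p.2 := by
      intro h
      have : p.2 ∈ (({x.1, x.2} : Set V) ∩ {p.1, p.2}) := ⟨by simp [h], by simp⟩
      simp [hpd] at this
    have hqx2 : x.2 ≠ q.2 := by
      intro h
      have : q.2 ∈ (({x.1, x.2} : Set V) ∩ {q.1, q.2}) := ⟨by simp [h], by simp⟩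
      simp [hqd] at this
    obtain ⟨-, hp1w, hp1w'⟩ := card_three_distinct (hcard i _ hp1)
    obtain ⟨-, hq1w, hq1w'⟩ := card_three_distinct (hcard i _ hq1)
    obtain ⟨-, hp2w, hp2w'⟩ := card_three_distinct (hcardE _ hp2)
    obtain ⟨-, hq2w, hq2w'⟩ := card_three_distinct (hcardE _ hq2)
    -- first coordinates
    have hM : ({x.1, p.1, w} : Finset V) = {x.1, q.1, w} :=
      hMeq _ hp1 _ hq1 x.1 (by simp) (by simp)
    have h1 : p.1 = q.1 := by
      have : p.1 ∈ ({x.1, q.1, w} : Finset V) := hM ▸ (by simp)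
      simp only [Finset.mem_insert, Finset.mem_singleton] at this
      rcases this with h | h | h
      · exact absurd h.symm hpx1
      · exact h
      · exact absurd h hp1w'
    -- second coordinates
    have hEe : ({x.2, p.2, w} : Finset V) = {x.2, q.2, w} :=
      hEeq _ hp2 _ hq2 x.2 w hp2w (by simp) (by simp) (by simp) (by simp)
    have h2 : p.2 = q.2 := by
      have : p.2 ∈ ({x.2, q.2, w} : Finset V) := hEe ▸ (by simp)
      simp only [Finset.mem_insert, Finset.mem_singleton] at this
      rcases this with h | h | h
      · exact absurd h.symm hpx2
      · exact h
      · exact absurd h hp2w'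
    exact Prod.ext h1 h2
  by_contra hgt
  push_neg at hgt
  obtain ⟨a, ha, b, hb, c, hc, hab, hac, hbc⟩ :=
    (Set.two_lt_ncard (Set.toFinite S)).mp hgt
  obtain ⟨wa, ha1, ha2⟩ := ha.2
  obtain ⟨wb, hb1, hb2⟩ := hb.2
  obtain ⟨wc, hc1, hc2⟩ := hc.2
  -- all three M i edges coincide
  have eab : ({x.1, a.1, wa} : Finset V) = {x.1, b.1, wb} :=
    hMeq _ ha1 _ hb1 x.1 (by simp) (by simp)
  have eac : ({x.1, a.1, wa} : Finset V) = {x.1, c.1, wc} :=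
    hMeq _ ha1 _ hc1 x.1 (by simp) (by simp)
  obtain ⟨hax, haw, -⟩ := card_three_distinct (hcard i _ ha1)
  obtain ⟨hbx, hbw, -⟩ := card_three_distinct (hcard i _ hb1)
  obtain ⟨hcx, hcw, -⟩ := card_three_distinct (hcard i _ hc1)
  -- the three witnesses lie in e.erase x.1, a 2-element set
  set e := ({x.1, a.1, wa} : Finset V) with he
  have hwa : wa ∈ e.erase x.1 := Finset.mem_erase.mpr ⟨haw.symm, by simp [he]⟩
  have hwb : wb ∈ e.erase x.1 := Finset.mem_erase.mpr ⟨hbw.symm, by simp [eab]⟩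
  have hwc : wc ∈ e.erase x.1 := Finset.mem_erase.mpr ⟨hcw.symm, by simp [eac]⟩
  have hecard : (e.erase x.1).card = 2 := by
    rw [Finset.card_erase_of_mem (by simp [he]), hcard i _ ha1]
  obtain ⟨y, z, hyz, hez⟩ := Finset.card_eq_two.mp hecard
  rw [hez, Finset.mem_insert, Finset.mem_singleton] at hwa hwb hwc
  have htwo : wa = wb ∨ wa = wc ∨ wb = wc := by
    rcases hwa with h1 | h1 <;> rcases hwb with h2 | h2 <;> rcases hwc with h3 | h3 <;>
      simp [h1, h2, h3]
  rcases htwo with h | h | h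
  · subst h
    exact hab (key a ha b hb wa ha1 ha2 hb1 hb2)
  · subst h
    exact hac (key a ha c hc wa ha1 ha2 hc1 hc2)
  · subst h
    exact hbc (key b hb c hc wb hb1 hb2 hc1 hc2)
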